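/- arXiv:2002.10733 — 10 statements merged into one kernel-verified Lean document; each statement's English description precedes it below -/
import Mathlib

section
/- Let h, w, s, m be positive integers. For any image x, any block base classifier f with block size s, and any class c, if n_c(x) ≥ max_{c' ≠ c} ( n_{c'}(x) + [c > c'] ) + 2(m+s−1)², where [c > c'] equals 1 if c > c' and 0 otherwise, then for every image x' that is an m×m patch perturbation of x, the smoothed classifier satisfies g(x') = c. (Proposition 1, block smoothing certificate.) -/
/-- The `L × L` square region (with cyclic wraparound) whose upper-left corner is `q`. -/
def square {h w : ℕ} (L : ℕ) (q : ZMod h × ZMod w) : Set (ZMod h × ZMod w) :=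
  {p | ∃ u v : ℕ, u < L ∧ v < L ∧ p = (q.1 + (u : ZMod h), q.2 + (v : ZMod w))}

/-- The smoothed classifier: the least class maximizing the count vector `n`. -/
noncomputable def smoothed {C : Type*} [Fintype C] [LinearOrder C] [Nonempty C]
    (n : C → ℕ) : C :=
  (Finset.univ.filter fun c => ∀ c', n c' ≤ n c).min' (by
    obtain ⟨c, -, hc⟩ :=
      Finset.exists_max_image (Finset.univ : Finset C) n Finset.univ_nonempty
    refine ⟨c, ?_⟩
    simp only [Finset.mem_filter, Finset.mem_univ, true_and]
    exact fun c' => hc c' (Finset.mem_univ c'))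

/-!
A perturbation confined to the patch `Q(i,j)` can only change the votes of blocks `B(a,b)` that
meet the patch, and every such corner `(a,b)` lies in the `(m+s-1) × (m+s-1)` square with corner
`(i-(s-1), j-(s-1))`. Hence each class count moves by at most `(m+s-1)²`, and a margin of twice
that (plus one for the tie-break towards smaller labels) keeps `c` the least maximiser.
-/

open Finset

theorem smoothed_eq_of_forall_add_ite_le {C : Type*} [Fintype C] [LinearOrder C] [Nonempty C]
    {n : C → ℕ} {c : C} (h : ∀ c' ≠ c, n c' + (if c' < c then 1 else 0) ≤ n c) :
    smoothed n = c := by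
  have hmax : ∀ c', n c' ≤ n c := fun c' => by
    rcases eq_or_ne c' c with rfl | hc'
    · rfl
    · exact le_of_add_le_left (h c' hc')
  refine le_antisymm (min'_le _ c (by simpa using hmax)) (le_min' _ _ c fun c' hc' => ?_)
  by_contra! hlt
  have := h c' hlt.ne
  rw [if_pos hlt] at this
  have := (mem_filter.mp hc').2 c
  omega

theorem card_filter_le_card_filter_add_ncard {α : Type*} (s : Finset α) {p q : α → Prop}
    [DecidablePred p] [DecidablePred q] {S : Set α} (hS : S.Finite)
    (h : ∀ a ∉ S, p a → q a) :
    #(s.filter p) ≤ #(s.filter q) + S.ncard := by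
  classical
  calc #(s.filter p) ≤ #(s.filter q ∪ hS.toFinset) := by
        refine card_le_card fun a ha => ?_
        rw [mem_filter] at ha
        by_cases haS : a ∈ S
        · exact mem_union_right _ (hS.mem_toFinset.mpr haS)
        · exact mem_union_left _ (mem_filter.mpr ⟨ha.1, h a haS ha.2⟩)
    _ ≤ #(s.filter q) + #hS.toFinset := card_union_le _ _
    _ = #(s.filter q) + S.ncard := by rw [Set.ncard_eq_toFinset_card S hS]

theorem ncard_square_le {h w : ℕ} (L : ℕ) (q : ZMod h × ZMod w) :
    (square L q).ncard ≤ L ^ 2 := by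
  let corner : Fin L × Fin L → ZMod h × ZMod w := fun uv =>
    (q.1 + (uv.1 : ℕ), q.2 + (uv.2 : ℕ))
  have hsub : square L q ⊆ corner '' Set.univ := by
    rintro p ⟨u, v, hu, hv, rfl⟩
    exact ⟨(⟨u, hu⟩, ⟨v, hv⟩), trivial, rfl⟩
  calc (square L q).ncard ≤ (corner '' Set.univ).ncard :=
        Set.ncard_le_ncard hsub (Set.toFinite _)
    _ ≤ (Set.univ : Set (Fin L × Fin L)).ncard := Set.ncard_image_le (Set.toFinite _)
    _ = L ^ 2 := by simp [sq]

theorem exists_lt_eq_sub_add_of_add_eq_add {R : Type*} [AddCommGroupWithOne R] {a b : R}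
    {s m u u' : ℕ} (hu : u < s) (hu' : u' < m) (h : a + u = b + u') :
    ∃ t < m + s - 1, a = b - ((s - 1 : ℕ) : R) + t := by
  refine ⟨u' + (s - 1 - u), by omega, ?_⟩
  have hcast : ((u' + (s - 1 - u) : ℕ) : R) = u' + ((s - 1 : ℕ) : R) - u := by
    rw [show u' + (s - 1 - u) = u' + (s - 1) - u by omega, Nat.cast_sub (by omega), Nat.cast_add]
  rw [hcast, eq_sub_of_add_eq h]
  abel

theorem mem_square_of_mem_square_of_mem_square {h w s m : ℕ} {a b p : ZMod h × ZMod w}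
    (hpa : p ∈ square s a) (hpb : p ∈ square m b) :
    a ∈ square (m + s - 1) (b.1 - ((s - 1 : ℕ) : ZMod h), b.2 - ((s - 1 : ℕ) : ZMod w)) := by
  obtain ⟨u, v, hu, hv, rfl⟩ := hpa
  obtain ⟨u', v', hu', hv', hp⟩ := hpb
  obtain ⟨t₁, ht₁, h₁⟩ := exists_lt_eq_sub_add_of_add_eq_add hu hu' (congrArg Prod.fst hp)
  obtain ⟨t₂, ht₂, h₂⟩ := exists_lt_eq_sub_add_of_add_eq_add hv hv' (congrArg Prod.snd hp)
  exact ⟨t₁, t₂, ht₁, ht₂, Prod.ext h₁ h₂⟩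

theorem block_smoothing_certificate_general
    (h w s m : ℕ) [NeZero h] [NeZero w]
    (P : Type*) (C : Type*) [Fintype C] [LinearOrder C] [Nonempty C]
    (f : (ZMod h × ZMod w → P) → (ZMod h × ZMod w) → C → Bool)
    (hf : ∀ (x x' : ZMod h × ZMod w → P) (ab : ZMod h × ZMod w),
      (∀ p ∈ square s ab, x p = x' p) → ∀ c, f x ab c = f x' ab c)
    (x : ZMod h × ZMod w → P) (c : C)
    (hcert : ∀ c' ≠ c,
      (Finset.univ.filter fun ab => f x ab c' = true).card
          + (if c' < c then 1 else 0) + 2 * (m + s - 1) ^ 2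
        ≤ (Finset.univ.filter fun ab => f x ab c = true).card)
    (x' : ZMod h × ZMod w → P)
    (hpatch : ∃ ij : ZMod h × ZMod w, ∀ p ∉ square m ij, x' p = x p) :
    smoothed (fun c0 => (Finset.univ.filter fun ab => f x' ab c0 = true).card) = c := by
  obtain ⟨ij, hij⟩ := hpatch
  set A := square (m + s - 1) (ij.1 - ((s - 1 : ℕ) : ZMod h), ij.2 - ((s - 1 : ℕ) : ZMod w))
  have hagree : ∀ ab ∉ A, ∀ c0, f x ab c0 = f x' ab c0 := fun ab hab =>
    hf x x' ab fun p hp =>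
      (hij p fun hpm => hab (mem_square_of_mem_square_of_mem_square hp hpm)).symm
  have hcount (y y' : ZMod h × ZMod w → P) (hyy' : ∀ ab ∉ A, ∀ c0, f y ab c0 = f y' ab c0)
      (c0 : C) : #(univ.filter fun ab => f y ab c0 = true)
        ≤ #(univ.filter fun ab => f y' ab c0 = true) + (m + s - 1) ^ 2 :=
    (card_filter_le_card_filter_add_ncard univ (Set.toFinite A)
      fun ab hab hy => hyy' ab hab c0 ▸ hy).trans (Nat.add_le_add_left (ncard_square_le _ _) _)
  refine smoothed_eq_of_forall_add_ite_le fun c' hc' => ?_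
  have hmargin := hcert c' hc'
  have hc'_up := hcount x' x (fun ab hab c0 => (hagree ab hab c0).symm) c'
  have hc_down := hcount x x' hagree c
  omega

/-- **Proposition 1 (block smoothing certificate).** -/
theorem block_smoothing_certificate
    (h w s m : ℕ) [NeZero h] [NeZero w] (hs : 0 < s) (hm : 0 < m)
    (P : Type*) (C : Type*) [Fintype C] [LinearOrder C] [Nonempty C]
    (f : (ZMod h × ZMod w → P) → (ZMod h × ZMod w) → C → Bool)
    (hf : ∀ (x x' : ZMod h × ZMod w → P) (ab : ZMod h × ZMod w),
      (∀ p ∈ square s ab, x p = x' p) → ∀ c, f x ab c = f x' ab c)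
    (x : ZMod h × ZMod w → P) (c : C)
    (hcert : ∀ c' ≠ c,
      (Finset.univ.filter fun ab => f x ab c' = true).card
          + (if c' < c then 1 else 0) + 2 * (m + s - 1) ^ 2
        ≤ (Finset.univ.filter fun ab => f x ab c = true).card)
    (x' : ZMod h × ZMod w → P)
    (hpatch : ∃ ij : ZMod h × ZMod w, ∀ p ∉ square m ij, x' p = x p) :
    smoothed (fun c0 => (Finset.univ.filter fun ab => f x' ab c0 = true).card) = c :=
  block_smoothing_certificate_general h w s m P C f hf x c hcert x' hpatch
end

section
/- Let h, w, s, m be positive integers. For any image x, any column base classifier f with band width s, and any class c, if n_c(x) ≥ max_{c' ≠ c} ( n_{c'}(x) + [c > c'] ) + 2(m+s−1), where [c > c'] equals 1 if c > c' and 0 otherwise, then for every image x' that is an m×m patch perturbation of x, the smoothed classifier satisfies g(x') = c. (Proposition 2, band/column smoothing certificate.) -/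
/-- The band (column) of width `s` (with cyclic wraparound) whose leftmost column is `b`. -/
def band {h w : ℕ} (s : ℕ) (b : ZMod w) : Set (ZMod h × ZMod w) :=
  {p | ∃ j : ℕ, j < s ∧ p.2 = b + (j : ZMod w)}

open Finset

theorem smoothed_eq_of_forall_ne {C : Type*} [Fintype C] [LinearOrder C] [Nonempty C]
    (n : C → ℕ) (c : C) (hn : ∀ c' ≠ c, n c' + (if c' < c then 1 else 0) ≤ n c) :
    smoothed n = c := by
  have hmax : ∀ c', n c' ≤ n c := fun c' => by
    rcases eq_or_ne c' c with rfl | hc'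
    · rfl
    · exact (Nat.le_add_right _ _).trans (hn c' hc')
  refine le_antisymm (min'_le _ _ (by simpa using hmax)) (le_min' _ _ _ fun y hy => ?_)
  by_contra! hyc
  have hgap := hn y hyc.ne
  rw [if_pos hyc] at hgap
  have := (mem_filter.mp hy).2 c
  omega

def bandBasesMeeting {w : ℕ} (s m : ℕ) (j : ZMod w) : Finset (ZMod w) :=
  (range (m + s - 1)).image fun k : ℕ => j + k - (s - 1 : ℕ)

theorem card_bandBasesMeeting_le {w : ℕ} (s m : ℕ) (j : ZMod w) :
    #(bandBasesMeeting s m j) ≤ m + s - 1 :=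
  card_image_le.trans (card_range _).le

theorem disjoint_band_square_of_notMem_bandBasesMeeting {h w s m : ℕ} {b : ZMod w}
    {q : ZMod h × ZMod w} (hb : b ∉ bandBasesMeeting s m q.2) :
    Disjoint (band (h := h) s b) (square m q) := by
  refine Set.disjoint_left.mpr fun p ⟨j, hj, hpj⟩ ⟨u, v, _, hv, hpq⟩ => hb ?_
  have hcol : b + (j : ZMod w) = q.2 + v := by rw [← hpj, hpq]
  refine mem_image.mpr ⟨v + (s - 1 - j), mem_range.mpr (by omega), ?_⟩
  push_cast [Nat.cast_sub (Nat.le_sub_one_of_lt hj)]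
  linear_combination -hcol

theorem card_filter_le_card_filter_add_card {α : Type*} [Fintype α] [DecidableEq α]
    (p q : α → Prop) [DecidablePred p] [DecidablePred q] (D : Finset α)
    (hpq : ∀ a ∉ D, p a → q a) :
    #(univ.filter p) ≤ #(univ.filter q) + #D := by
  have hsub : univ.filter p ⊆ univ.filter q ∪ D := fun a ha => by
    by_cases haD : a ∈ D
    · exact mem_union_right _ haD
    · exact mem_union_left _ (by simpa using hpq a haD (by simpa using ha))
  exact (card_le_card hsub).trans (card_union_le _ _)

theorem band_smoothing_certificate_general
    (h w s m : ℕ) [NeZero w]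
    (P : Type*) (C : Type*) [Fintype C] [LinearOrder C] [Nonempty C]
    (f : (ZMod h × ZMod w → P) → ZMod w → C → Bool)
    (hf : ∀ (x x' : ZMod h × ZMod w → P) (b : ZMod w),
      (∀ p ∈ band (h := h) s b, x p = x' p) → ∀ c, f x b c = f x' b c)
    (x : ZMod h × ZMod w → P) (c : C)
    (hcert : ∀ c' ≠ c,
      (Finset.univ.filter fun b => f x b c' = true).card
          + (if c' < c then 1 else 0) + 2 * (m + s - 1)
        ≤ (Finset.univ.filter fun b => f x b c = true).card)
    (x' : ZMod h × ZMod w → P)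
    (hpatch : ∃ ij : ZMod h × ZMod w, ∀ p ∉ square m ij, x' p = x p) :
    smoothed (fun c0 => (Finset.univ.filter fun b => f x' b c0 = true).card) = c := by
  obtain ⟨q, hq⟩ := hpatch
  set D := bandBasesMeeting s m q.2
  have hagree : ∀ b ∉ D, ∀ c0, f x' b c0 = f x b c0 := fun b hb =>
    hf x' x b fun p hp =>
      hq p ((disjoint_band_square_of_notMem_bandBasesMeeting hb).notMem_of_mem_left hp)
  have hcard : #D ≤ m + s - 1 := card_bandBasesMeeting_le s m q.2
  apply smoothed_eq_of_forall_ne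
  intro c' hc'
  have hup := card_filter_le_card_filter_add_card (fun b => f x' b c' = true)
    (fun b => f x b c' = true) D fun b hb => by rw [hagree b hb]; exact id
  have hdown := card_filter_le_card_filter_add_card (fun b => f x b c = true)
    (fun b => f x' b c = true) D fun b hb => by rw [hagree b hb]; exact id
  have := hcert c' hc'
  omega

/-- **Proposition 2 (band/column smoothing certificate).** -/
theorem band_smoothing_certificate
    (h w s m : ℕ) [NeZero h] [NeZero w] (hs : 0 < s) (hm : 0 < m)
    (P : Type*) (C : Type*) [Fintype C] [LinearOrder C] [Nonempty C]
    (f : (ZMod h × ZMod w → P) → ZMod w → C → Bool)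
    (hf : ∀ (x x' : ZMod h × ZMod w → P) (b : ZMod w),
      (∀ p ∈ band (h := h) s b, x p = x' p) → ∀ c, f x b c = f x' b c)
    (x : ZMod h × ZMod w → P) (c : C)
    (hcert : ∀ c' ≠ c,
      (Finset.univ.filter fun b => f x b c' = true).card
          + (if c' < c then 1 else 0) + 2 * (m + s - 1)
        ≤ (Finset.univ.filter fun b => f x b c = true).card)
    (x' : ZMod h × ZMod w → P)
    (hpatch : ∃ ij : ZMod h × ZMod w, ∀ p ∉ square m ij, x' p = x p) :
    smoothed (fun c0 => (Finset.univ.filter fun b => f x' b c0 = true).card) = c :=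
  band_smoothing_certificate_general h w s m P C f hf x c hcert x' hpatch
end

section
/- Let h, w, s, m be positive integers with m + s − 1 ≤ h and m + s − 1 ≤ w. For every (i,j) ∈ ZMod h × ZMod w, the set of positions (a,b) ∈ ZMod h × ZMod w for which the block B(a,b) = {(a+u, b+v) : 0 ≤ u,v < s} intersects the patch Q(i,j) = {(i+u, j+v) : 0 ≤ u,v < m} has exactly (m + s − 1)² elements. (Two-dimensional wraparound intersection count used in the proof of Proposition 1.) -/
/-- The `L × L` square region (with cyclic wraparound in each coordinate) whose
upper-left corner is `q`, as a finite set of positions. -/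
def squareF {h w : ℕ} [NeZero h] [NeZero w] (L : ℕ) (q : ZMod h × ZMod w) :
    Finset (ZMod h × ZMod w) :=
  ((Finset.range L) ×ˢ (Finset.range L)).image
    fun uv : ℕ × ℕ => (q.1 + (uv.1 : ZMod h), q.2 + (uv.2 : ZMod w))

/-!
A square with wraparound is the product of two cyclic arcs, so the count factors as the square of
the one-dimensional count. In one dimension, the arc of length `s` at `a` meets the arc of length
`m` at `i` exactly when `a` lies in the arc of length `m + s - 1` starting at `i - (s - 1)`, and
this arc has `m + s - 1` distinct points as long as it does not wrap around onto itself.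
-/

open Finset

def arc {R : Type*} [AddCommGroupWithOne R] [DecidableEq R] (L : ℕ) (x : R) : Finset R :=
  (range L).image fun u : ℕ => x + u

section Arc

variable {R : Type*} [AddCommGroupWithOne R] [DecidableEq R]

theorem arc_inter_arc_nonempty_iff {s m : ℕ} {a i : R} :
    (arc s a ∩ arc m i).Nonempty ↔ ∃ u < s, ∃ u' < m, a + u = i + u' := by
  simp only [Finset.Nonempty, arc, mem_inter, mem_image, mem_range]
  constructor
  · rintro ⟨_, ⟨u, hu, rfl⟩, u', hu', he⟩
    exact ⟨u, hu, u', hu', he.symm⟩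
  · rintro ⟨u, hu, u', hu', he⟩
    exact ⟨a + u, ⟨u, hu, rfl⟩, u', hu', he.symm⟩

theorem arc_inter_arc_nonempty_iff_mem_arc {s m : ℕ} (hs : 0 < s) (hm : 0 < m) {a i : R} :
    (arc s a ∩ arc m i).Nonempty ↔ a ∈ arc (m + s - 1) (i - (s - 1 : ℕ)) := by
  rw [arc_inter_arc_nonempty_iff]
  simp only [arc, mem_image, mem_range]
  constructor
  · rintro ⟨u, hu, u', hu', he⟩
    refine ⟨u' + (s - 1 - u), by omega, ?_⟩
    rw [eq_sub_of_add_eq he, Nat.cast_add, Nat.cast_sub (by omega : u ≤ s - 1)]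
    abel
  · rintro ⟨t, ht, rfl⟩
    rcases lt_or_ge t s with hts | hst
    · refine ⟨s - 1 - t, by omega, 0, hm, ?_⟩
      rw [Nat.cast_sub (by omega : t ≤ s - 1), Nat.cast_zero]
      abel
    · refine ⟨0, hs, t - (s - 1), by omega, ?_⟩
      rw [Nat.cast_sub (by omega : s - 1 ≤ t), Nat.cast_zero]
      abel

end Arc

theorem card_arc {n L : ℕ} (hL : L ≤ n) (x : ZMod n) : (arc L x).card = L := by
  rw [arc, card_image_of_injOn, card_range]
  intro u hu v hv huv
  have hcast : (u : ZMod n) = v := add_left_cancel huv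
  rwa [ZMod.natCast_eq_natCast_iff', Nat.mod_eq_of_lt (by simp at hu; omega),
    Nat.mod_eq_of_lt (by simp at hv; omega)] at hcast

theorem card_filter_arc_inter_arc_nonempty {n s m : ℕ} [NeZero n] (hs : 0 < s) (hm : 0 < m)
    (hmn : m + s - 1 ≤ n) (i : ZMod n) :
    (univ.filter fun a : ZMod n => (arc s a ∩ arc m i).Nonempty).card = m + s - 1 := by
  have hfilter : (univ.filter fun a : ZMod n => (arc s a ∩ arc m i).Nonempty) =
      arc (m + s - 1) (i - (s - 1 : ℕ)) := by
    ext a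
    simp [arc_inter_arc_nonempty_iff_mem_arc hs hm]
  rw [hfilter, card_arc hmn]

theorem squareF_eq_arc_product {h w : ℕ} [NeZero h] [NeZero w] (L : ℕ)
    (q : ZMod h × ZMod w) : squareF L q = arc L q.1 ×ˢ arc L q.2 := by
  ext ⟨x₁, x₂⟩
  simp only [squareF, arc, mem_image, mem_product, mem_range, Prod.exists, Prod.mk.injEq]
  constructor
  · rintro ⟨u, v, ⟨hu, hv⟩, h1, h2⟩
    exact ⟨⟨u, hu, h1⟩, v, hv, h2⟩
  · rintro ⟨⟨u, hu, h1⟩, v, hv, h2⟩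
    exact ⟨u, v, ⟨hu, hv⟩, h1, h2⟩

/-- **Two-dimensional wraparound intersection count.** For `m + s - 1 ≤ h` and
`m + s - 1 ≤ w`, exactly `(m + s - 1)²` positions `(a,b)` give an `s × s` block
intersecting the `m × m` patch at `(i,j)`. -/
theorem block_patch_intersection_count
    (h w s m : ℕ) [NeZero h] [NeZero w] (hs : 0 < s) (hm : 0 < m)
    (hmh : m + s - 1 ≤ h) (hmw : m + s - 1 ≤ w)
    (ij : ZMod h × ZMod w) :
    (Finset.univ.filter fun ab : ZMod h × ZMod w =>
        (squareF s ab ∩ squareF m ij).Nonempty).card = (m + s - 1) ^ 2 := by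
  simp only [squareF_eq_arc_product, product_inter_product, nonempty_product]
  rw [← univ_product_univ, filter_product (fun a => (arc s a ∩ arc m ij.1).Nonempty)
    (fun b => (arc s b ∩ arc m ij.2).Nonempty), card_product,
    card_filter_arc_inter_arc_nonempty hs hm hmh, card_filter_arc_inter_arc_nonempty hs hm hmw, sq]
end

section
/- Let h, w, s, m be positive integers. For any image x, any column base classifier f with band width s, any image x' that is an m×m patch perturbation of x, and every class c, the class counts satisfy |n_c(x) − n_c(x')| ≤ m + s − 1 (as integers). (Stability of column-smoothing counts, Equation 12 in the appendix.) -/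
/-! A patch can change only the pixels of its `m` columns `j, …, j + m - 1`, and the band at `b`
sees column `j + v` only if `b = j + v - t` with `0 ≤ t < s`. Hence every band that meets the patch
starts at `j + k` for an integer `-s < k < m`, at most `m + s - 1` columns; on all other columns
the base classifier returns the same votes on `x` and `x'`, and each count moves by at most the
number of exceptional columns. -/

open scoped Finset

theorem Finset.card_filter_le_card_filter_add {α : Type*} [Fintype α] (p q : α → Prop)
    [DecidablePred p] [DecidablePred q] (B : Finset α) (hpq : ∀ a ∉ B, p a → q a) :
    #(univ.filter p) ≤ #(univ.filter q) + #B := by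
  classical
  calc #(univ.filter p) ≤ #(univ.filter q ∪ B) := by
        refine card_le_card fun a ha => ?_
        by_cases haB : a ∈ B
        · exact mem_union_right _ haB
        · exact mem_union_left _ (mem_filter.2 ⟨mem_univ a, hpq a haB (mem_filter.1 ha).2⟩)
    _ ≤ #(univ.filter q) + #B := card_union_le _ _

theorem Finset.abs_card_filter_sub_card_filter_le {α : Type*} [Fintype α] (p q : α → Prop)
    [DecidablePred p] [DecidablePred q] (B : Finset α) (hpq : ∀ a ∉ B, p a ↔ q a) :
    |(#(univ.filter p) : ℤ) - #(univ.filter q)| ≤ #B := by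
  have hle := card_filter_le_card_filter_add p q B fun a ha => (hpq a ha).1
  have hge := card_filter_le_card_filter_add q p B fun a ha => (hpq a ha).2
  rw [abs_sub_le_iff]
  constructor <;> omega

noncomputable def bandsMeetingPatch {w : ℕ} (s m : ℕ) (j : ZMod w) : Finset (ZMod w) :=
  (Finset.Ioo (-(s : ℤ)) m).image fun k : ℤ => j + (k : ZMod w)

theorem card_bandsMeetingPatch_le {w : ℕ} {s m : ℕ} (hs : 0 < s) (j : ZMod w) :
    (#(bandsMeetingPatch s m j) : ℤ) ≤ m + s - 1 := by
  calc (#(bandsMeetingPatch s m j) : ℤ) ≤ #(Finset.Ioo (-(s : ℤ)) m) := by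
        exact_mod_cast Finset.card_image_le
    _ = m + s - 1 := by rw [Int.card_Ioo_of_lt _ _ (by omega)]; ring

theorem mem_bandsMeetingPatch_of_mem_band_of_mem_square {h w : ℕ} {s m : ℕ} {b : ZMod w}
    {ij : ZMod h × ZMod w} {p : ZMod h × ZMod w} (hband : p ∈ band s b)
    (hsquare : p ∈ square m ij) : b ∈ bandsMeetingPatch s m ij.2 := by
  obtain ⟨t, ht, hpt⟩ := hband
  obtain ⟨u, v, -, hv, rfl⟩ := hsquare
  refine Finset.mem_image.2 ⟨(v : ℤ) - t, Finset.mem_Ioo.2 ⟨by omega, by omega⟩, ?_⟩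
  push_cast
  linear_combination hpt

theorem eqOn_band_of_eqOn_compl_square {h w : ℕ} {P : Type*} {s m : ℕ}
    {x x' : ZMod h × ZMod w → P} {ij : ZMod h × ZMod w}
    (hpatch : ∀ p ∉ square m ij, x' p = x p) {b : ZMod w}
    (hb : b ∉ bandsMeetingPatch s m ij.2) : ∀ p ∈ band (h := h) s b, x p = x' p := by
  intro p hp
  by_contra hne
  exact hb (mem_bandsMeetingPatch_of_mem_band_of_mem_square hp
    (by_contra fun hsq => hne (hpatch p hsq).symm))

theorem column_counts_stability_general
    (h w s m : ℕ) [NeZero w] (hs : 0 < s)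
    (P : Type*) (C : Type*)
    (f : (ZMod h × ZMod w → P) → ZMod w → C → Bool)
    (hf : ∀ (x x' : ZMod h × ZMod w → P) (b : ZMod w),
      (∀ p ∈ band (h := h) s b, x p = x' p) → ∀ c, f x b c = f x' b c)
    (x x' : ZMod h × ZMod w → P)
    (hpatch : ∃ ij : ZMod h × ZMod w, ∀ p ∉ square m ij, x' p = x p)
    (c : C) :
    |((Finset.univ.filter fun b => f x b c = true).card : ℤ)
        - ((Finset.univ.filter fun b => f x' b c = true).card : ℤ)|
      ≤ ((m : ℤ) + (s : ℤ) - 1) := by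
  obtain ⟨ij, hij⟩ := hpatch
  calc _ ≤ (#(bandsMeetingPatch s m ij.2) : ℤ) :=
        Finset.abs_card_filter_sub_card_filter_le _ _ _ fun b hb => by
          rw [hf x x' b (eqOn_band_of_eqOn_compl_square hij hb) c]
    _ ≤ m + s - 1 := card_bandsMeetingPatch_le hs ij.2

/-- **Stability of column-smoothing counts (Equation 12).** If `x'` is an `m × m` patch
perturbation of `x`, then for every class `c` the column-smoothing class counts of `x`
and `x'` differ by at most `m + s - 1`. -/
theorem column_counts_stability
    (h w s m : ℕ) [NeZero h] [NeZero w] (hs : 0 < s) (hm : 0 < m)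
    (P : Type*) (C : Type*) [Fintype C] [LinearOrder C] [Nonempty C]
    (f : (ZMod h × ZMod w → P) → ZMod w → C → Bool)
    (hf : ∀ (x x' : ZMod h × ZMod w → P) (b : ZMod w),
      (∀ p ∈ band (h := h) s b, x p = x' p) → ∀ c, f x b c = f x' b c)
    (x x' : ZMod h × ZMod w → P)
    (hpatch : ∃ ij : ZMod h × ZMod w, ∀ p ∉ square m ij, x' p = x p)
    (c : C) :
    |((Finset.univ.filter fun b => f x b c = true).card : ℤ)
        - ((Finset.univ.filter fun b => f x' b c = true).card : ℤ)|
      ≤ ((m : ℤ) + (s : ℤ) - 1) :=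
  column_counts_stability_general h w s m hs P C f hf x x' hpatch c
end

section
/- Let C be a finite nonempty linearly ordered type, let n, n' : C → ℕ, and let Δ be a natural number such that |(n c : ℤ) − (n' c : ℤ)| ≤ Δ for every c ∈ C. If some class c satisfies n c ≥ n c' + [c > c'] + 2Δ for every c' ≠ c, where [c > c'] equals 1 if c > c' and 0 otherwise, then c is the least element of C attaining the maximum value of n'. (Abstract de-randomized smoothing certificate with deterministic tie-breaking toward smaller-indexed classes, underlying Propositions 1 and 2.) -/
section

variable {C : Type*} [Fintype C] [LinearOrder C] [Nonempty C]

theorem smoothed_eq_of_le_of_lt {n : C → ℕ} {c : C} (hle : ∀ c', n c' ≤ n c)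
    (hlt : ∀ c' < c, n c' < n c) : smoothed n = c := by
  have hc : c ∈ Finset.univ.filter fun d => ∀ c', n c' ≤ n d := by simpa using hle
  refine le_antisymm (Finset.min'_le _ _ hc) (Finset.le_min' _ _ _ fun d hd => ?_)
  by_contra! hdc
  exact (hlt d hdc).not_ge ((Finset.mem_filter.mp hd).2 c)

theorem smoothed_eq_of_add_ite_le {n : C → ℕ} {c : C}
    (hc : ∀ c' ≠ c, n c' + (if c' < c then 1 else 0) ≤ n c) : smoothed n = c := by
  refine smoothed_eq_of_le_of_lt (fun c' => ?_) (fun c' hc' => ?_)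
  · rcases eq_or_ne c' c with rfl | hne
    · exact le_rfl
    · exact le_of_add_le_left (hc c' hne)
  · simpa [hc'] using hc c' hc'.ne

end

theorem add_le_of_add_two_mul_le_of_abs_sub_le {a b a' b' k Δ : ℕ}
    (ha : |(a : ℤ) - a'| ≤ Δ) (hb : |(b : ℤ) - b'| ≤ Δ) (h : a + k + 2 * Δ ≤ b) :
    a' + k ≤ b' := by
  rw [abs_le] at ha hb
  omega

/-- **Abstract de-randomized smoothing certificate.** If the counts `n` and `n'` differ
by at most `Δ` in each class, and class `c` beats every other class `c'` in `n` by margin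
`2Δ` (plus `1` when `c > c'`, because ties are broken toward smaller classes), then `c`
is the least class attaining the maximum of `n'`. -/
theorem derandomized_smoothing_certificate
    {C : Type*} [Fintype C] [LinearOrder C] [Nonempty C]
    (n n' : C → ℕ) (Δ : ℕ)
    (hΔ : ∀ c, |(n c : ℤ) - (n' c : ℤ)| ≤ (Δ : ℤ))
    (c : C)
    (hc : ∀ c' ≠ c, n c' + (if c' < c then 1 else 0) + 2 * Δ ≤ n c) :
    smoothed n' = c :=
  smoothed_eq_of_add_ite_le fun c' hc' =>
    add_le_of_add_two_mul_le_of_abs_sub_le (hΔ c') (hΔ c) (hc c' hc')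
end

section
/- Let h, w, s, m be positive integers with m + s − 1 ≤ h and m + s − 1 ≤ w, and fix a patch location (i,j) ∈ ZMod h × ZMod w. If a block position (a,b) is drawn uniformly at random from ZMod h × ZMod w, then the probability that the block B(a,b) intersects the patch Q(i,j) equals (m + s − 1)² / (hw), and this probability is strictly less than 4·max(m², s²) / (hw). (Equation 1: Δ_block = (m+s−1)²/(hw) < 4·max(m², k)/(hw) with k = s² retained pixels.) -/
def cyclicInterval {n : ℕ} (L : ℕ) (a : ZMod n) : Finset (ZMod n) :=
  (Finset.range L).image fun u : ℕ => a + u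

lemma mem_cyclicInterval {n L : ℕ} {a x : ZMod n} :
    x ∈ cyclicInterval L a ↔ ∃ u < L, a + u = x := by
  simp [cyclicInterval]

lemma card_cyclicInterval {n L : ℕ} (hL : L ≤ n) (a : ZMod n) :
    (cyclicInterval L a).card = L := by
  rw [cyclicInterval, Finset.card_image_of_injOn, Finset.card_range]
  intro u hu v hv huv
  have hcast : (u : ZMod n) = v := add_left_cancel huv
  simp only [Finset.coe_range, Set.mem_Iio] at hu hv
  rw [← ZMod.val_cast_of_lt (hu.trans_le hL), ← ZMod.val_cast_of_lt (hv.trans_le hL), hcast]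

lemma cyclicInterval_inter_nonempty_iff {n s m : ℕ} (hs : 0 < s) (hm : 0 < m) (a i : ZMod n) :
    (cyclicInterval s a ∩ cyclicInterval m i).Nonempty ↔
      a ∈ cyclicInterval (m + s - 1) (i - ((s - 1 : ℕ) : ZMod n)) := by
  simp only [Finset.Nonempty, Finset.mem_inter, mem_cyclicInterval]
  constructor
  · rintro ⟨x, ⟨u, hu, rfl⟩, u', hu', heq⟩
    refine ⟨u' + (s - 1 - u), by omega, ?_⟩
    push_cast [Nat.cast_sub (Nat.le_sub_one_of_lt hu)]
    linear_combination heq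
  · rintro ⟨t, ht, rfl⟩
    -- split the offset `t` between the block (`s - 1 - k`) and the patch (`t - k`)
    obtain ⟨k, hkt, hks, hk⟩ : ∃ k ≤ t, k ≤ s - 1 ∧ (k = t ∨ k = s - 1) :=
      ⟨min t (s - 1), min_le_left _ _, min_le_right _ _, min_choice _ _⟩
    refine ⟨i + (t - k : ℕ), ⟨s - 1 - k, by omega, ?_⟩, t - k, by omega, rfl⟩
    push_cast [Nat.cast_sub hkt, Nat.cast_sub hks]
    ring

lemma squareF_eq_product {h w : ℕ} [NeZero h] [NeZero w] (L : ℕ) (q : ZMod h × ZMod w) :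
    squareF L q = cyclicInterval L q.1 ×ˢ cyclicInterval L q.2 :=
  Finset.prodMap_image_product (fun u : ℕ => q.1 + u) (fun v : ℕ => q.2 + v) _ _

lemma squareF_inter_nonempty_iff {h w s m : ℕ} [NeZero h] [NeZero w] (hs : 0 < s) (hm : 0 < m)
    (ab ij : ZMod h × ZMod w) :
    (squareF s ab ∩ squareF m ij).Nonempty ↔
      ab ∈ squareF (m + s - 1) (ij.1 - ((s - 1 : ℕ) : ZMod h), ij.2 - ((s - 1 : ℕ) : ZMod w)) := by
  rw [squareF_eq_product, squareF_eq_product, squareF_eq_product, Finset.product_inter_product,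
    Finset.nonempty_product, Finset.mem_product, cyclicInterval_inter_nonempty_iff hs hm,
    cyclicInterval_inter_nonempty_iff hs hm]

lemma card_squareF {h w L : ℕ} [NeZero h] [NeZero w] (hLh : L ≤ h) (hLw : L ≤ w)
    (q : ZMod h × ZMod w) : (squareF L q).card = L ^ 2 := by
  rw [squareF_eq_product, Finset.card_product, card_cyclicInterval hLh, card_cyclicInterval hLw,
    sq]

lemma sq_add_sub_one_lt_four_mul_max_sq {m s : ℕ} (hm : 0 < m) :
    (m + s - 1) ^ 2 < 4 * max (m ^ 2) (s ^ 2) := by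
  have hlt : m + s - 1 < 2 * max m s := by omega
  calc (m + s - 1) ^ 2 < (2 * max m s) ^ 2 := Nat.pow_lt_pow_left hlt two_ne_zero
    _ = 4 * max (m ^ 2) (s ^ 2) := by
      rw [mul_pow, (Nat.pow_left_strictMono two_ne_zero).monotone.map_max]; rfl

/-- **Equation 1 (block smoothing intersection probability).** For a uniformly random
block position `(a,b)`, the probability that the `s × s` block intersects the `m × m`
patch at `(i,j)` equals `(m+s−1)²/(hw)`, which is strictly less than
`4·max(m², s²)/(hw)`. -/
theorem block_intersection_probability
    (h w s m : ℕ) [NeZero h] [NeZero w] (hs : 0 < s) (hm : 0 < m)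
    (hmh : m + s - 1 ≤ h) (hmw : m + s - 1 ≤ w)
    (ij : ZMod h × ZMod w) :
    (PMF.uniformOfFintype (ZMod h × ZMod w)).toOuterMeasure
        {ab : ZMod h × ZMod w | (squareF s ab ∩ squareF m ij).Nonempty}
      = (((m + s - 1) ^ 2 : ℕ) : ENNReal) / (((h * w : ℕ) : ENNReal))
    ∧ (((m + s - 1) ^ 2 : ℕ) : ENNReal) / (((h * w : ℕ) : ENNReal))
      < ((4 * max (m ^ 2) (s ^ 2) : ℕ) : ENNReal) / (((h * w : ℕ) : ENNReal)) := by
  have hevent : {ab : ZMod h × ZMod w | (squareF s ab ∩ squareF m ij).Nonempty} =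
      ↑(squareF (m + s - 1) (ij.1 - ((s - 1 : ℕ) : ZMod h), ij.2 - ((s - 1 : ℕ) : ZMod w))) :=
    Set.ext fun ab => squareF_inter_nonempty_iff hs hm ab ij
  have hhw : ((h * w : ℕ) : ENNReal) ≠ 0 := by simp [NeZero.ne h, NeZero.ne w]
  refine ⟨?_, ENNReal.div_lt_div_right hhw (ENNReal.natCast_ne_top _)
    (by exact_mod_cast sq_add_sub_one_lt_four_mul_max_sq hm)⟩
  simp only [PMF.toOuterMeasure_uniformOfFintype_apply, hevent, Finset.coe_sort_coe,
    Fintype.card_coe]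
  rw [card_squareF hmh hmw, Fintype.card_prod, ZMod.card, ZMod.card]
end

section
/- Let w, s, m be positive integers with m + s − 1 ≤ w, and fix a patch column location i ∈ ZMod w. If a band position x is drawn uniformly at random from ZMod w, then the probability that the cyclic interval I_s(x) of length s at x intersects the cyclic interval I_m(i) of length m at i equals (m + s − 1) / w, and this probability is strictly less than 2·max(m, s) / w. (Equation 2: Δ_col = (m+s−1)/w < 2·max(hm, k)/(hw) with k = sh retained pixels.) -/
/-- The cyclic interval of length `L` starting at `i` in `ZMod w`. -/
def cycInterval {w : ℕ} [NeZero w] (L : ℕ) (i : ZMod w) : Finset (ZMod w) :=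
  (Finset.range L).image fun u : ℕ => i + (u : ZMod w)

/-!
Two cyclic intervals `I_s(x)` and `I_m(i)` meet iff `x - i = v - u` for some `u < s`, `v < m`.
These differences are exactly the integers `-(s - 1), …, m - 1`, so the band positions `x`
hitting `I_m(i)` form the single cyclic interval `I_{m+s-1}(i - (s - 1))`. When
`m + s - 1 ≤ w` it has `m + s - 1` distinct elements, which gives the probability; the
inequality is `m + s - 1 < 2 max(m, s)`.
-/

section Differences

variable {R : Type*} [AddCommGroupWithOne R] {s m : ℕ}

theorem exists_natCast_sub_natCast_iff (hs : 0 < s) (hm : 0 < m) (d : R) :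
    (∃ u < s, ∃ v < m, d = (v : R) - u) ↔ ∃ t < m + s - 1, d = (t : R) - ((s - 1 : ℕ) : R) := by
  constructor
  · rintro ⟨u, hu, v, hv, rfl⟩
    refine ⟨v + (s - 1 - u), by omega, ?_⟩
    rw [Nat.cast_add, Nat.cast_sub (by omega : u ≤ s - 1)]
    abel
  · rintro ⟨t, ht, rfl⟩
    rcases le_or_gt t (s - 1) with hle | hgt
    · refine ⟨s - 1 - t, by omega, 0, hm, ?_⟩
      rw [Nat.cast_sub hle, Nat.cast_zero]
      abel
    · refine ⟨0, hs, t - (s - 1), by omega, ?_⟩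
      rw [Nat.cast_sub hgt.le, Nat.cast_zero, sub_zero]

end Differences

namespace cycInterval

variable {w : ℕ} [NeZero w]

theorem mem_iff {L : ℕ} {i x : ZMod w} : x ∈ cycInterval L i ↔ ∃ u < L, x - i = u := by
  simp only [cycInterval, Finset.mem_image, Finset.mem_range, sub_eq_iff_eq_add', eq_comm]

theorem card_eq {L : ℕ} (hL : L ≤ w) (i : ZMod w) : (cycInterval L i).card = L := by
  rw [cycInterval, Finset.card_image_of_injOn, Finset.card_range]
  intro a ha b hb hab
  have hcast : (a : ZMod w) = b := add_left_cancel hab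
  simpa only [ZMod.val_cast_of_lt ((Finset.mem_range.1 ha).trans_le hL),
    ZMod.val_cast_of_lt ((Finset.mem_range.1 hb).trans_le hL)] using congrArg ZMod.val hcast

theorem inter_nonempty_iff {s m : ℕ} {x i : ZMod w} :
    (cycInterval s x ∩ cycInterval m i).Nonempty ↔ ∃ u < s, ∃ v < m, x - i = (v : ZMod w) - u := by
  simp only [Finset.Nonempty, Finset.mem_inter, mem_iff]
  constructor
  · rintro ⟨y, ⟨u, hu, hyu⟩, v, hv, hyv⟩
    exact ⟨u, hu, v, hv, by linear_combination hyv - hyu⟩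
  · rintro ⟨u, hu, v, hv, hxi⟩
    exact ⟨x + u, ⟨u, hu, by ring⟩, v, hv, by linear_combination hxi⟩

theorem setOf_inter_nonempty {s m : ℕ} (hs : 0 < s) (hm : 0 < m) (i : ZMod w) :
    {x : ZMod w | (cycInterval s x ∩ cycInterval m i).Nonempty}
      = ↑(cycInterval (m + s - 1) (i - ((s - 1 : ℕ) : ZMod w))) := by
  ext x
  rw [Set.mem_ofPred_eq, Finset.mem_coe, inter_nonempty_iff, exists_natCast_sub_natCast_iff hs hm,
    mem_iff]
  exact exists_congr fun t => and_congr_right fun _ =>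
    ⟨fun h => by linear_combination h, fun h => by linear_combination h⟩

end cycInterval

/-- **Equation 2 (band/column smoothing intersection probability).** For a uniformly
random band position `x`, the probability that the width-`s` band intersects the
width-`m` patch columns at `i` equals `(m+s−1)/w`, which is strictly less than
`2·max(m, s)/w`. -/
theorem band_intersection_probability
    (w s m : ℕ) [NeZero w] (hs : 0 < s) (hm : 0 < m) (hwid : m + s - 1 ≤ w)
    (i : ZMod w) :
    (PMF.uniformOfFintype (ZMod w)).toOuterMeasure
        {x : ZMod w | (cycInterval s x ∩ cycInterval m i).Nonempty}
      = ((m + s - 1 : ℕ) : ENNReal) / ((w : ℕ) : ENNReal)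
    ∧ ((m + s - 1 : ℕ) : ENNReal) / ((w : ℕ) : ENNReal)
      < ((2 * max m s : ℕ) : ENNReal) / ((w : ℕ) : ENNReal) := by
  refine ⟨?_, ENNReal.div_lt_div_right (by simp [NeZero.ne w]) (ENNReal.natCast_ne_top w)
    (by exact_mod_cast (by omega : m + s - 1 < 2 * max m s))⟩
  rw [cycInterval.setOf_inter_nonempty hs hm i, PMF.toOuterMeasure_uniformOfFintype_apply]
  simp only [Finset.coe_sort_coe, Fintype.card_coe, cycInterval.card_eq hwid, ZMod.card]
end

section
/- Let N, κ, B be natural numbers with κ ≤ N, let C be a finite nonempty linearly ordered type, and let x, x' be images such that x' differs from x only on pixels whose band index lies in a fixed set A ⊆ Fin N with |A| ≤ B. Let f be a κ-band base classifier with counts n_c(x) and smoothed classifier g. If some class c satisfies n_c(x) ≥ max_{c' ≠ c} ( n_{c'}(x) + [c > c'] ) + 2·( C(N, κ) − C(N − B, κ) ), where [c > c'] equals 1 if c > c' and 0 otherwise and C(·,·) is the binomial coefficient, then g(x') = c. (Multi-band de-randomized smoothing certificate from the appendix.) -/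
/-!
An adversary confined to the bands in `A` can only change the votes of the base
classifications whose band set `T` meets `A`, and there are
`C(N, κ) - C(N - |A|, κ) ≤ C(N, κ) - C(N - B, κ)` of them. Each count therefore moves by at
most that amount, so a margin of twice it (plus one for tie-breaking towards smaller
labels) survives the attack.
-/

open Finset

theorem card_filter_not_disjoint {α : Type*} [Fintype α] [DecidableEq α] (A : Finset α)
    (κ : ℕ) :
    #{T : {T : Finset α // T.card = κ} | ¬Disjoint T.1 A}
      = (Fintype.card α).choose κ - (Fintype.card α - #A).choose κ := by
  have hdisj : #{T : {T : Finset α // T.card = κ} | Disjoint T.1 A}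
      = (Fintype.card α - #A).choose κ := by
    rw [← card_compl, ← card_powersetCard κ Aᶜ]
    refine card_nbij (·.1) (fun T hT => ?_) (fun T₁ _ T₂ _ h => Subtype.ext h)
      (fun s hs => ?_)
    · exact mem_powersetCard.2 ⟨subset_compl_iff_disjoint_right.2 (mem_filter.1 hT).2, T.2⟩
    · obtain ⟨hsA, hs⟩ := mem_powersetCard.1 (mem_coe.1 hs)
      exact ⟨⟨s, hs⟩, mem_filter.2 ⟨mem_univ _, subset_compl_iff_disjoint_right.1 hsA⟩, rfl⟩
  rw [← hdisj, ← Fintype.card_finset_len, ← card_univ, filter_not, card_sdiff_of_subset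
    (filter_subset _ _)]

theorem card_votes_le_add_card_not_disjoint {N κ : ℕ} {I P C : Type*}
    {f : (Fin N × I → P) → {T : Finset (Fin N) // T.card = κ} → C → Bool}
    (hf : ∀ (x x' : Fin N × I → P) (T : {T : Finset (Fin N) // T.card = κ}),
      (∀ p : Fin N × I, p.1 ∈ T.1 → x p = x' p) → ∀ c, f x T c = f x' T c)
    {A : Finset (Fin N)} {x x' : Fin N × I → P} (hpatch : ∀ p : Fin N × I, p.1 ∉ A → x' p = x p)
    (c : C) :
    #{T | f x' T c = true}
      ≤ #{T | f x T c = true} + #{T : {T : Finset (Fin N) // T.card = κ} | ¬Disjoint T.1 A} := by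
  refine (card_le_card fun T hT => ?_).trans (card_union_le _ _)
  by_cases hTA : Disjoint T.1 A
  · have hsame := hf x x' T (fun p hp => (hpatch p (disjoint_left.1 hTA hp)).symm) c
    exact mem_union_left _ (mem_filter.2 ⟨mem_univ _, hsame ▸ (mem_filter.1 hT).2⟩)
  · exact mem_union_right _ (mem_filter.2 ⟨mem_univ _, hTA⟩)

theorem multiband_smoothing_certificate_general
    (N κ B : ℕ)
    (P : Type*) (I : Type*) (C : Type*) [Fintype C] [LinearOrder C] [Nonempty C]
    (f : (Fin N × I → P) → {T : Finset (Fin N) // T.card = κ} → C → Bool)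
    (hf : ∀ (x x' : Fin N × I → P) (T : {T : Finset (Fin N) // T.card = κ}),
      (∀ p : Fin N × I, p.1 ∈ T.1 → x p = x' p) → ∀ c, f x T c = f x' T c)
    (x : Fin N × I → P) (c : C)
    (hcert : ∀ c' ≠ c,
      (Finset.univ.filter fun T : {T : Finset (Fin N) // T.card = κ} =>
            f x T c' = true).card
          + (if c' < c then 1 else 0)
          + 2 * (Nat.choose N κ - Nat.choose (N - B) κ)
        ≤ (Finset.univ.filter fun T : {T : Finset (Fin N) // T.card = κ} =>
            f x T c = true).card)
    (A : Finset (Fin N)) (hA : A.card ≤ B)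
    (x' : Fin N × I → P)
    (hpatch : ∀ p : Fin N × I, p.1 ∉ A → x' p = x p) :
    smoothed
        (fun c0 => (Finset.univ.filter fun T : {T : Finset (Fin N) // T.card = κ} =>
          f x' T c0 = true).card) = c := by
  have hmeet : #{T : {T : Finset (Fin N) // T.card = κ} | ¬Disjoint T.1 A}
      ≤ N.choose κ - (N - B).choose κ := by
    rw [card_filter_not_disjoint, Fintype.card_fin]
    exact Nat.sub_le_sub_left (Nat.choose_le_choose κ (Nat.sub_le_sub_left hA N)) _
  have hrise := card_votes_le_add_card_not_disjoint hf hpatch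
  have hfall := card_votes_le_add_card_not_disjoint hf (x := x') (x' := x)
    fun p hp => (hpatch p hp).symm
  refine smoothed_eq_of_forall_add_ite_le fun c' hc' => ?_
  have := hcert c' hc'
  have := hrise c'
  have := hfall c
  omega

/-- **Multi-band de-randomized smoothing certificate.** Images are maps
`Fin N × I → P` (band index, within-band position). The base classifier uses a
`κ`-element set of bands, and the adversary may only modify pixels whose band index
lies in a set `A` with `|A| ≤ B`; at most `C(N,κ) − C(N−B,κ)` of the base
classifications can be affected. -/
theorem multiband_smoothing_certificate
    (N κ B : ℕ) (hκ : κ ≤ N)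
    (P : Type*) (I : Type*) (C : Type*) [Fintype C] [LinearOrder C] [Nonempty C]
    (f : (Fin N × I → P) → {T : Finset (Fin N) // T.card = κ} → C → Bool)
    (hf : ∀ (x x' : Fin N × I → P) (T : {T : Finset (Fin N) // T.card = κ}),
      (∀ p : Fin N × I, p.1 ∈ T.1 → x p = x' p) → ∀ c, f x T c = f x' T c)
    (x : Fin N × I → P) (c : C)
    (hcert : ∀ c' ≠ c,
      (Finset.univ.filter fun T : {T : Finset (Fin N) // T.card = κ} =>
            f x T c' = true).card
          + (if c' < c then 1 else 0)
          + 2 * (Nat.choose N κ - Nat.choose (N - B) κ)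
        ≤ (Finset.univ.filter fun T : {T : Finset (Fin N) // T.card = κ} =>
            f x T c = true).card)
    (A : Finset (Fin N)) (hA : A.card ≤ B)
    (x' : Fin N × I → P)
    (hpatch : ∀ p : Fin N × I, p.1 ∉ A → x' p = x p) :
    smoothed
        (fun c0 => (Finset.univ.filter fun T : {T : Finset (Fin N) // T.card = κ} =>
          f x' T c0 = true).card) = c :=
  multiband_smoothing_certificate_general N κ B P I C f hf x c hcert A hA x' hpatch
end

section
/- Let (Ω, μ) be a probability space, C a type of class labels, F, F' : Ω → C functions with {ω : F ω = c} and {ω : F' ω = c'} measurable for all classes, and E a measurable set with μ(E) ≤ Δ such that F ω = F' ω for all ω ∉ E. If μ{ω : F ω = c} > 1/2 + Δ for some class c, then μ{ω : F' ω = c} > 1/2, and consequently μ{ω : F' ω = c'} < μ{ω : F' ω = c} for every class c' ≠ c. (Randomized-smoothing majority certificate of Section 2.1: if the base classifier returns c with probability greater than 0.5 + Δ on x, the smoothed classification at any patch-perturbed x' is still c.) -/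
open MeasureTheory

/-! Outside `E` the two classifiers agree, so the mass of class `c` can drop by at most
`μ E ≤ Δ` when passing from `F` to `F'`; it therefore stays above `1/2`. In a probability
space a set of mass above `1/2` outweighs every set disjoint from it, in particular every
other fibre of `F'`. -/

lemma measure_fiber_le_add_of_eq_off {Ω C : Type*} [MeasurableSpace Ω] (μ : Measure Ω)
    {f g : Ω → C} {E : Set Ω} (hfg : ∀ ω ∉ E, f ω = g ω) (c : C) :
    μ {ω | f ω = c} ≤ μ {ω | g ω = c} + μ E := by
  have hsub : {ω | f ω = c} ⊆ {ω | g ω = c} ∪ E := by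
    intro ω hω
    by_cases hωE : ω ∈ E
    · exact Or.inr hωE
    · exact Or.inl ((hfg ω hωE).symm.trans hω)
  exact (measure_mono hsub).trans (measure_union_le _ _)

lemma measure_lt_of_disjoint_of_half_lt {Ω : Type*} [MeasurableSpace Ω] (μ : Measure Ω)
    [IsProbabilityMeasure μ] {s t : Set Ω} (hst : Disjoint s t) (ht : MeasurableSet t)
    (h : 1 / 2 < μ t) : μ s < μ t := by
  calc μ s ≤ μ tᶜ := measure_mono hst.subset_compl_right
    _ = 1 - μ t := prob_compl_eq_one_sub ht
    _ < μ t := by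
      rw [ENNReal.sub_lt_iff_lt_right (measure_ne_top μ t) prob_le_one, ← ENNReal.add_halves 1]
      exact ENNReal.add_lt_add h h

theorem randomized_smoothing_majority_certificate_general
    {Ω : Type*} [MeasurableSpace Ω] (μ : Measure Ω) [IsProbabilityMeasure μ]
    {C : Type*} (F F' : Ω → C)
    (hF' : ∀ c : C, MeasurableSet {ω | F' ω = c})
    (E : Set Ω) (Δ : ENNReal) (hEΔ : μ E ≤ Δ)
    (hagree : ∀ ω ∉ E, F ω = F' ω)
    (c : C) (hc : μ {ω | F ω = c} > 1 / 2 + Δ) :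
    μ {ω | F' ω = c} > 1 / 2 ∧
      ∀ c' ≠ c, μ {ω | F' ω = c'} < μ {ω | F' ω = c} := by
  have hΔ : Δ ≠ ⊤ := fun h => by simp [h] at hc
  have hmajority : 1 / 2 < μ {ω | F' ω = c} := by
    refine (ENNReal.add_lt_add_iff_right hΔ).mp ?_
    calc 1 / 2 + Δ < μ {ω | F ω = c} := hc
      _ ≤ μ {ω | F' ω = c} + μ E := measure_fiber_le_add_of_eq_off μ hagree c
      _ ≤ μ {ω | F' ω = c} + Δ := by gcongr
  refine ⟨hmajority, fun c' hc' => measure_lt_of_disjoint_of_half_lt μ ?_ (hF' c) hmajority⟩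
  exact Set.disjoint_left.mpr fun ω h₁ h₂ => hc' (h₁.symm.trans h₂)

/-- **Randomized-smoothing majority certificate (Section 2.1).** If the base classifier
`F` on the clean input returns class `c` with probability greater than `1/2 + Δ`, and
the base classifications at the clean and perturbed inputs agree outside an event `E`
of probability at most `Δ`, then the perturbed base classifier `F'` returns `c` with
probability greater than `1/2`, hence `c` remains the (strict) plurality class. -/
theorem randomized_smoothing_majority_certificate
    {Ω : Type*} [MeasurableSpace Ω] (μ : Measure Ω) [IsProbabilityMeasure μ]
    {C : Type*} (F F' : Ω → C)
    (hF : ∀ c : C, MeasurableSet {ω | F ω = c})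
    (hF' : ∀ c : C, MeasurableSet {ω | F' ω = c})
    (E : Set Ω) (hE : MeasurableSet E) (Δ : ENNReal) (hEΔ : μ E ≤ Δ)
    (hagree : ∀ ω ∉ E, F ω = F' ω)
    (c : C) (hc : μ {ω | F ω = c} > 1 / 2 + Δ) :
    μ {ω | F' ω = c} > 1 / 2 ∧
      ∀ c' ≠ c, μ {ω | F' ω = c'} < μ {ω | F' ω = c} :=
  randomized_smoothing_majority_certificate_general μ F F' hF' E Δ hEΔ hagree c hc
end

section
/- Let (Ω, μ) be a probability space, C a type of class labels, F, F' : Ω → C functions with {ω : F ω = c} measurable for all classes and likewise for F', and E a measurable set with μ(E) ≤ Δ such that F ω = F' ω for all ω ∉ E. If some class c satisfies μ{ω : F ω = c} > μ{ω : F ω = c'} + 2Δ for every class c' ≠ c, then μ{ω : F' ω = c} > μ{ω : F' ω = c'} for every class c' ≠ c, so c is the unique class maximizing the smoothed class probabilities at the perturbed input. (The less strict per-class gap condition p_c − p_{c'} > 2Δ of Section 2.3, available when class probabilities are computed exactly.) -/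
open MeasureTheory

/-! Outside `E` the two classifiers agree, so each class probability moves by at most `μ E ≤ Δ`
when passing from `F` to `F'`. A gap of more than `2Δ` at `F` therefore survives at `F'`. -/

theorem measure_setOf_eq_le_add_of_eq_off {Ω α : Type*} [MeasurableSpace Ω] (μ : Measure Ω)
    {f g : Ω → α} {E : Set Ω} (h : ∀ ω ∉ E, f ω = g ω) (a : α) :
    μ {ω | g ω = a} ≤ μ {ω | f ω = a} + μ E :=
  calc μ {ω | g ω = a} ≤ μ ({ω | f ω = a} ∪ E) :=
        measure_mono fun ω hω => by
          by_cases hωE : ω ∈ E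
          · exact Or.inr hωE
          · exact Or.inl ((h ω hωE).trans hω)
    _ ≤ μ {ω | f ω = a} + μ E := measure_union_le _ _

theorem ENNReal.lt_of_add_two_mul_lt {a a' b b' Δ : ENNReal} (hgap : a + 2 * Δ < b)
    (ha : a' ≤ a + Δ) (hb : b ≤ b' + Δ) : a' < b' :=
  lt_of_add_lt_add_right <|
    calc a' + Δ ≤ a + Δ + Δ := add_le_add_left ha Δ
      _ = a + 2 * Δ := by rw [add_assoc, two_mul]
      _ < b := hgap
      _ ≤ b' + Δ := hb

theorem randomized_smoothing_gap_certificate_general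
    {Ω : Type*} [MeasurableSpace Ω] (μ : Measure Ω)
    {C : Type*} (F F' : Ω → C)
    (E : Set Ω) (Δ : ENNReal) (hEΔ : μ E ≤ Δ)
    (hagree : ∀ ω ∉ E, F ω = F' ω)
    (c : C) (hc : ∀ c' ≠ c, μ {ω | F ω = c} > μ {ω | F ω = c'} + 2 * Δ) :
    ∀ c' ≠ c, μ {ω | F' ω = c'} < μ {ω | F' ω = c} := by
  intro c' hc'
  have hF'_le : μ {ω | F' ω = c'} ≤ μ {ω | F ω = c'} + Δ :=
    (measure_setOf_eq_le_add_of_eq_off μ hagree c').trans (add_le_add_right hEΔ _)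
  have hF_le : μ {ω | F ω = c} ≤ μ {ω | F' ω = c} + Δ :=
    (measure_setOf_eq_le_add_of_eq_off μ (fun ω hω => (hagree ω hω).symm) c).trans
      (add_le_add_right hEΔ _)
  exact ENNReal.lt_of_add_two_mul_lt (hc c' hc') hF'_le hF_le

/-- **Per-class gap certificate (Section 2.3).** If the base classifier `F` on the clean
input returns class `c` with probability exceeding that of every other class `c'` by
more than `2Δ`, and the base classifications at the clean and perturbed inputs agree
outside an event `E` of probability at most `Δ`, then `c` is the unique class maximizing
the smoothed class probabilities at the perturbed input. -/
theorem randomized_smoothing_gap_certificate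
    {Ω : Type*} [MeasurableSpace Ω] (μ : Measure Ω) [IsProbabilityMeasure μ]
    {C : Type*} (F F' : Ω → C)
    (hF : ∀ c : C, MeasurableSet {ω | F ω = c})
    (hF' : ∀ c : C, MeasurableSet {ω | F' ω = c})
    (E : Set Ω) (hE : MeasurableSet E) (Δ : ENNReal) (hEΔ : μ E ≤ Δ)
    (hagree : ∀ ω ∉ E, F ω = F' ω)
    (c : C) (hc : ∀ c' ≠ c, μ {ω | F ω = c} > μ {ω | F ω = c'} + 2 * Δ) :
    ∀ c' ≠ c, μ {ω | F' ω = c'} < μ {ω | F' ω = c} :=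
  randomized_smoothing_gap_certificate_general μ F F' E Δ hEΔ hagree c hc
end
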